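/- arXiv:1106.5424 — 2 statements merged into one kernel-verified Lean document; each statement's English description precedes it below -/
import Mathlib

section
/- For every n ≥ 3, there is exactly one signed permutation σ of rank n whose full index set {1,...,n} forms an n-crossing, namely σ(i) = −(n+1)+i for 1 ≤ i ≤ n; equivalently, it is the unique σ ∈ B_n with σ(1) < σ(2) < ... < σ(n) < 1 satisfying the lower n-crossing condition. For n ≤ 2 there are exactly two such signed permutations. -/
def SignedSet (n : ℕ) : Set ℤ := {i : ℤ | i ≠ 0 ∧ |i| ≤ (n : ℤ)}

/-- A signed permutation (type B permutation) of rank `n`: a bijection of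
`{-n,...,-1,1,...,n}` onto itself satisfying `σ(-i) = -σ(i)`. -/
def IsSignedPerm (n : ℕ) (σ : ℤ → ℤ) : Prop :=
  (∀ i : ℤ, σ (-i) = -σ i) ∧ Set.BijOn σ (SignedSet n) (SignedSet n)

/-- Number of weak exceedances: `#{j ∈ [n] : σ(j) ≥ j}`. -/
noncomputable def wexB (n : ℕ) (σ : ℤ → ℤ) : ℕ :=
  ((Finset.Icc (1 : ℤ) (n : ℤ)).filter (fun j => j ≤ σ j)).card

/-- Number of negative entries: `#{j ∈ [n] : σ(j) < 0}`. -/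
noncomputable def negB (n : ℕ) (σ : ℤ → ℤ) : ℕ :=
  ((Finset.Icc (1 : ℤ) (n : ℤ)).filter (fun j => σ j < 0)).card

/-- Two strictly increasing chains `b₁ < ... < b_k ≤ c₁ < ... < c_k`. -/
def Chain2 {k : ℕ} (b c : Fin k → ℤ) : Prop :=
  StrictMono b ∧ StrictMono c ∧ ∀ i j : Fin k, b i ≤ c j

/-- `σ` has a `k`-crossing: a `k`-subset of `[n]` (listed as `a`) which is an upper
`k`-crossing (first or second form) or a lower `k`-crossing. -/
def IsKCrossB (n : ℕ) (σ : ℤ → ℤ) : ℕ → Prop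
  | 0 => True
  | (k + 1) => ∃ a : Fin (k + 1) → ℤ,
      (∀ i, 1 ≤ a i ∧ a i ≤ (n : ℤ)) ∧ Function.Injective a ∧
      (Chain2 a (fun i => σ (a i)) ∨
       Chain2 (Function.update a 0 (-(a 0)))
              (Function.update (fun i => σ (a i)) 0 (-(σ (a 0)))) ∨
       (StrictMono a ∧ StrictMono (fun i => σ (a i)) ∧
        ∀ i j : Fin (k + 1), σ (a i) < a j))

/-- `σ` has a `k`-nesting. -/
def IsKNestB (n : ℕ) (σ : ℤ → ℤ) : ℕ → Prop
  | 0 => True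
  | (k + 1) => ∃ a : Fin (k + 1) → ℤ,
      (∀ i, 1 ≤ a i ∧ a i ≤ (n : ℤ)) ∧ Function.Injective a ∧
      ((StrictMono a ∧ StrictAnti (fun i => σ (a i)) ∧
        ∀ i j : Fin (k + 1), a i ≤ σ (a j)) ∨
       Chain2 (Function.update a 0 (-(a 0)))
              (Function.update (fun i => σ (a i.rev)) 0 (-(σ (a (0 : Fin (k + 1)).rev)))) ∨
       (StrictMono a ∧ StrictAnti (fun i => σ (a i)) ∧
        ∀ i j : Fin (k + 1), σ (a i) < a j))

/-- `cro*_B(σ)`: the largest `k` such that `σ` has a `k`-crossing. -/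
noncomputable def croStarB (n : ℕ) (σ : ℤ → ℤ) : ℕ := sSup {k : ℕ | IsKCrossB n σ k}

/-- `nes*_B(σ)`: the largest `k` such that `σ` has a `k`-nesting. -/
noncomputable def nesStarB (n : ℕ) (σ : ℤ → ℤ) : ℕ := sSup {k : ℕ | IsKNestB n σ k}

/-- Concrete model of `B_n`: a permutation of `Fin n` together with a sign vector. -/
abbrev BnModel (n : ℕ) := Equiv.Perm (Fin n) × (Fin n → Bool)

def toSignedAux (n : ℕ) (x : BnModel n) (i : ℤ) : ℤ :=
  if h : 1 ≤ i ∧ i ≤ (n : ℤ) then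
    (if x.2 ⟨(i - 1).toNat, by omega⟩ then -(((x.1 ⟨(i - 1).toNat, by omega⟩ : Fin n) : ℤ) + 1)
     else ((x.1 ⟨(i - 1).toNat, by omega⟩ : Fin n) : ℤ) + 1)
  else i

/-- The signed permutation `ℤ → ℤ` associated to a pair (permutation, sign vector). -/
def toSigned (n : ℕ) (x : BnModel n) : ℤ → ℤ :=
  fun i => if 0 < i then toSignedAux n x i else -toSignedAux n x (-i)

/-!
An `n`-crossing of a signed permutation of rank `n` uses every position `1, …, n`.
An upper crossing of the first form would need `n ≤ σ(a₁) < σ(a₂) ≤ n`. In the second form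
the chain `-σ(a₁) < σ(a₂) < σ(a₃) ≤ n` has its first entry `≤ n - 2`, yet it must dominate
the positions `n` and `n - 1`, one of which is not `a₁`; so for `n ≥ 3` only lower crossings
remain. In a lower `n`-crossing the positions are `1, …, n` in order and `σ` increases on them
through negative values in `[-n, -1]`, which forces `σ(i) = i - (n + 1)`. For `n ≤ 2` the
count is a finite check.
-/

open Function Set

section IntervalTuples

variable {ι : Type*} {m : ℕ}

theorem exists_fin_eq_succ {i : ℤ} (hi : i ∈ Icc 1 (m : ℤ)) : ∃ j : Fin m, (j : ℤ) + 1 = i :=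
  ⟨⟨(i - 1).toNat, by grind⟩, by grind⟩

theorem exists_fin_comp_eq_succ {a : ι → ℤ} (ha : ∀ i, a i ∈ Icc 1 (m : ℤ)) :
    ∃ g : ι → Fin m, a = fun i => (g i : ℤ) + 1 := by
  choose g hg using fun i => exists_fin_eq_succ (ha i)
  exact ⟨g, funext fun i => (hg i).symm⟩

theorem eq_succ_of_strictMono {a : Fin m → ℤ} (ha : ∀ i, a i ∈ Icc 1 (m : ℤ))
    (hmono : StrictMono a) (i : Fin m) : a i = i + 1 := by
  obtain ⟨g, rfl⟩ := exists_fin_comp_eq_succ ha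
  have hg : StrictMono g := fun i j hij => by
    have := hmono hij
    simp only at this
    omega
  simp only [hg.eq_id, id]

theorem exists_eq_of_injective {a : Fin m → ℤ} (ha : ∀ i, a i ∈ Icc 1 (m : ℤ))
    (hinj : Injective a) {v : ℤ} (hv : v ∈ Icc 1 (m : ℤ)) : ∃ i, a i = v := by
  obtain ⟨g, rfl⟩ := exists_fin_comp_eq_succ ha
  obtain ⟨j, rfl⟩ := exists_fin_eq_succ hv
  have hg : Injective g := fun i j hij => hinj (by simp [hij])
  obtain ⟨i, rfl⟩ := Finite.injective_iff_surjective.1 hg j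
  exact ⟨i, rfl⟩

end IntervalTuples

section MaximumCrossing

variable {n : ℕ} {σ : ℤ → ℤ}

theorem not_chain2_of_two_le {a : Fin n → ℤ} (hn : 2 ≤ n) (ha : ∀ i, a i ∈ Icc 1 (n : ℤ))
    (hinj : Injective a) (hσ : ∀ i, σ (a i) ≤ n) : ¬ Chain2 a (fun i => σ (a i)) := by
  rintro ⟨-, hmono, hle⟩
  obtain ⟨p, hp⟩ := exists_eq_of_injective ha hinj ⟨by omega, le_rfl⟩
  have h01 := @hmono ⟨0, by omega⟩ ⟨1, by omega⟩ (by simp [Fin.lt_def])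
  have hp0 := hle p ⟨0, by omega⟩
  have := hσ ⟨1, by omega⟩
  simp only [hp] at h01 hp0
  omega

theorem not_chain2_update_zero_of_three_le {k : ℕ} {a : Fin (k + 1) → ℤ} (hk : 2 ≤ k)
    (ha : ∀ i, a i ∈ Icc 1 ((k + 1 : ℕ) : ℤ)) (hinj : Injective a)
    (hσ : ∀ i, σ (a i) ≤ ((k + 1 : ℕ) : ℤ)) :
    ¬ Chain2 (update a 0 (-(a 0))) (update (fun i => σ (a i)) 0 (-(σ (a 0)))) := by
  rintro ⟨-, hmono, hle⟩
  set i₁ : Fin (k + 1) := ⟨1, by omega⟩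
  set i₂ : Fin (k + 1) := ⟨2, by omega⟩
  have hi₁ : i₁ ≠ 0 := by simp [i₁, Fin.ext_iff]
  have hi₂ : i₂ ≠ 0 := by simp [i₂, Fin.ext_iff]
  have h01 := @hmono 0 i₁ (by simp [i₁, Fin.lt_def])
  have h12 := @hmono i₁ i₂ (by simp [i₁, i₂, Fin.lt_def])
  simp only [update_self, update_of_ne hi₁, update_of_ne hi₂] at h01 h12
  have := hσ i₂
  obtain ⟨p, hp⟩ := exists_eq_of_injective ha hinj ⟨by omega, le_rfl⟩
  obtain ⟨q, hq⟩ := exists_eq_of_injective ha hinj (v := k) ⟨by omega, by omega⟩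
  obtain ⟨r, hr0, hr⟩ : ∃ r ≠ 0, k ≤ a r := by
    by_cases hp0 : p = 0
    · exact ⟨q, by rintro rfl; subst hp0; omega, hq.ge⟩
    · exact ⟨p, hp0, by omega⟩
  have := hle r 0
  simp only [update_self, update_of_ne hr0] at this
  omega

theorem eq_sub_of_lowerCrossing {a : Fin n → ℤ} (ha : ∀ i, a i ∈ Icc 1 (n : ℤ))
    (hσ : ∀ i, σ (a i) ∈ SignedSet n) (hmono : StrictMono a)
    (hσmono : StrictMono fun i => σ (a i)) (hlt : ∀ i j, σ (a i) < a j) :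
    ∀ i : ℤ, 1 ≤ i → i ≤ n → σ i = i - (n + 1) := by
  have hidx := eq_succ_of_strictMono ha hmono
  have hshift : ∀ i, σ (a i) + n + 1 ∈ Icc 1 (n : ℤ) := fun i => by
    obtain ⟨hne, habs⟩ := hσ i
    have h0 : (0 : ℕ) < n := by have := i.isLt; omega
    have hlt0 := hlt i ⟨0, h0⟩
    rw [hidx ⟨0, h0⟩, Fin.val_mk, Nat.cast_zero] at hlt0
    have := abs_le.1 habs
    simp only [mem_Icc]
    omega
  have hval := eq_succ_of_strictMono hshift fun i j hij => by
    have := hσmono hij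
    simp only at this ⊢
    omega
  intro i h1 h2
  obtain ⟨j, rfl⟩ := exists_fin_eq_succ ⟨h1, h2⟩
  have := hval j
  rw [hidx] at this
  omega

theorem eq_sub_of_isKCrossB_self (hn : 3 ≤ n) (hσ : MapsTo σ (Icc 1 n) (SignedSet n))
    (h : IsKCrossB n σ n) : ∀ i : ℤ, 1 ≤ i → i ≤ n → σ i = i - (n + 1) := by
  obtain ⟨k, rfl⟩ : ∃ k, n = k + 1 := ⟨n - 1, by omega⟩
  obtain ⟨a, ha, hinj, hcross⟩ := h
  have haσ : ∀ i, σ (a i) ∈ SignedSet (k + 1) := fun i => hσ (ha i)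
  have hle : ∀ i, σ (a i) ≤ ((k + 1 : ℕ) : ℤ) := fun i => (abs_le.1 (haσ i).2).2
  rcases hcross with hupper | hupper' | ⟨hmono, hσmono, hlt⟩
  · exact absurd hupper (not_chain2_of_two_le (by omega) ha hinj hle)
  · exact absurd hupper' (not_chain2_update_zero_of_three_le (by omega) ha hinj hle)
  · exact eq_sub_of_lowerCrossing ha haσ hmono hσmono hlt

theorem isKCrossB_self_of_eq_sub (h : ∀ i : ℤ, 1 ≤ i → i ≤ n → σ i = i - (n + 1)) :
    IsKCrossB n σ n := by
  cases n with
  | zero => trivial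
  | succ k =>
    have hσ (i : Fin (k + 1)) : σ (i + 1) = i - (k + 1) := by
      rw [h _ (by omega) (by push_cast; omega)]
      push_cast
      ring
    refine ⟨fun i => i + 1, fun i => ?_, fun i j hij => ?_, Or.inr (Or.inr ⟨?_, ?_, ?_⟩)⟩
    · dsimp only
      omega
    · dsimp only at hij
      omega
    · intro i j hij
      dsimp only
      omega
    · intro i j hij
      dsimp only
      rw [hσ, hσ]
      omega
    · intro i j
      dsimp only
      rw [hσ]
      omega

end MaximumCrossing

section SignedPermutations

variable {n : ℕ}

theorem toSigned_natCast_succ (x : BnModel n) (j : Fin n) :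
    toSigned n x (j + 1) = if x.2 j then -((x.1 j : ℤ) + 1) else (x.1 j : ℤ) + 1 := by
  have hj : (⟨((j : ℤ) + 1 - 1).toNat, by omega⟩ : Fin n) = j := Fin.ext (by simp)
  simp only [toSigned, toSignedAux, if_pos (by omega : (0 : ℤ) < j + 1),
    dif_pos (⟨by omega, by omega⟩ : 1 ≤ (j : ℤ) + 1 ∧ (j : ℤ) + 1 ≤ n), hj]

theorem toSigned_mapsTo (x : BnModel n) : MapsTo (toSigned n x) (Icc 1 n) (SignedSet n) := by
  intro i hi
  obtain ⟨j, rfl⟩ := exists_fin_eq_succ hi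
  have := (x.1 j).isLt
  rw [toSigned_natCast_succ]
  split <;> simp only [SignedSet, mem_ofPred_eq, abs_le] <;> omega

def maxCrossing (n : ℕ) : BnModel n := (Fin.revPerm, fun _ => true)

theorem toSigned_eq_sub_iff (x : BnModel n) :
    (∀ i : ℤ, 1 ≤ i → i ≤ n → toSigned n x i = i - (n + 1)) ↔ x = maxCrossing n := by
  constructor
  · intro h
    have hx (j : Fin n) : x.1 j = Fin.revPerm j ∧ x.2 j = true := by
      have hj := h (j + 1) (by omega) (by omega)
      have := (x.1 j).isLt
      rw [toSigned_natCast_succ] at hj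
      cases hb : x.2 j
      · simp only [hb, Bool.false_eq_true, if_false] at hj
        omega
      · simp only [hb, if_true] at hj
        exact ⟨Fin.ext (by rw [Fin.revPerm_apply, Fin.val_rev]; omega), rfl⟩
    exact Prod.ext (Equiv.ext fun j => (hx j).1) (funext fun j => (hx j).2)
  · rintro rfl i h1 h2
    obtain ⟨j, rfl⟩ := exists_fin_eq_succ ⟨h1, h2⟩
    rw [toSigned_natCast_succ]
    simp only [maxCrossing, if_true, Fin.revPerm_apply, Fin.val_rev]
    omega

theorem isKCrossB_toSigned_self_iff (hn : 3 ≤ n) (x : BnModel n) :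
    IsKCrossB n (toSigned n x) n ↔ x = maxCrossing n :=
  ⟨fun h => (toSigned_eq_sub_iff x).1 (eq_sub_of_isKCrossB_self hn (toSigned_mapsTo x) h),
    fun h => isKCrossB_self_of_eq_sub ((toSigned_eq_sub_iff x).2 h)⟩

end SignedPermutations

instance {m : ℕ} (f : Fin m → ℤ) : Decidable (StrictMono f) :=
  inferInstanceAs (Decidable (∀ i j : Fin m, i < j → f i < f j))

instance {m : ℕ} (b c : Fin m → ℤ) : Decidable (Chain2 b c) :=
  inferInstanceAs (Decidable (StrictMono b ∧ StrictMono c ∧ ∀ i j : Fin m, b i ≤ c j))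

def IsCrossingTuple {k : ℕ} (σ : ℤ → ℤ) (a : Fin (k + 1) → ℤ) : Prop :=
  Chain2 a (fun i => σ (a i)) ∨
  Chain2 (update a 0 (-(a 0))) (update (fun i => σ (a i)) 0 (-(σ (a 0)))) ∨
  (StrictMono a ∧ StrictMono (fun i => σ (a i)) ∧ ∀ i j : Fin (k + 1), σ (a i) < a j)

instance {k : ℕ} (σ : ℤ → ℤ) (a : Fin (k + 1) → ℤ) : Decidable (IsCrossingTuple σ a) :=
  inferInstanceAs (Decidable (_ ∨ _ ∨ _))

/- Quantifying over `Fin n`-valued position tuples makes `IsKCrossB` decidable, so the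
cases `n ≤ 2` are settled by `decide`. -/
theorem isKCrossB_succ_iff_exists_fin (n k : ℕ) (σ : ℤ → ℤ) :
    IsKCrossB n σ (k + 1) ↔
      ∃ f : Fin (k + 1) → Fin n, Injective f ∧ IsCrossingTuple σ (fun i => f i + 1) := by
  constructor
  · rintro ⟨a, ha, hinj, hcross⟩
    obtain ⟨g, rfl⟩ := exists_fin_comp_eq_succ ha
    exact ⟨g, fun i j hij => hinj (by simp [hij]), hcross⟩
  · rintro ⟨f, hinj, hcross⟩
    refine ⟨_, fun i => ⟨by omega, by omega⟩, fun i j hij => hinj (Fin.ext ?_), hcross⟩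
    simpa using hij

def decidableIsKCrossB (n k : ℕ) (σ : ℤ → ℤ) : Decidable (IsKCrossB n σ k) :=
  match k with
  | 0 => isTrue trivial
  | k + 1 => decidable_of_iff _ (isKCrossB_succ_iff_exists_fin n k σ).symm

open scoped Classical in
/-- Enumeration of maximum crossings: for n ≥ 3 there is exactly one signed permutation
of rank n whose full index set [n] forms an n-crossing, namely σ(i) = i − (n+1);
for 1 ≤ n ≤ 2 there are exactly two. -/
theorem count_max_crossings (n : ℕ) :
    (3 ≤ n →
      ((Finset.univ : Finset (BnModel n)).filter
          (fun x => IsKCrossB n (toSigned n x) n)).card = 1 ∧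
      (∀ x : BnModel n, IsKCrossB n (toSigned n x) n →
        ∀ i : ℤ, 1 ≤ i → i ≤ (n : ℤ) → toSigned n x i = i - ((n : ℤ) + 1))) ∧
    (1 ≤ n → n ≤ 2 →
      ((Finset.univ : Finset (BnModel n)).filter
          (fun x => IsKCrossB n (toSigned n x) n)).card = 2) := by
  refine ⟨fun hn => ⟨?_, fun x => eq_sub_of_isKCrossB_self hn (toSigned_mapsTo x)⟩, fun h1 h2 => ?_⟩
  · rw [Finset.card_eq_one]
    exact ⟨maxCrossing n, by ext x; simp [isKCrossB_toSigned_self_iff hn]⟩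
  · let := decidableIsKCrossB
    interval_cases n <;> rw [Finset.filter_congr_decidable] <;> decide
end

section
/- A signed permutation σ of rank n has cro*_B(σ) = n (i.e., an n-crossing using all of [n]) via the lower crossing condition if and only if σ(1) < σ(2) < ... < σ(n) < 1; for n ≥ 3 this forces σ(i) = i − (n+1) for all i ∈ [n]. -/
/-!
A strictly increasing integer sequence gains at least `1` per step, so
`σ(i) ≥ σ(1) + (i - 1)` and `σ(n) ≥ σ(i) + (n - i)`. Since `σ` maps `[n]` into
`{±1, …, ±n}`, we have `σ(1) ≥ -n`, and `σ(n) < 1` forces `σ(n) ≤ -1`; the two chains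
are then squeezed into `σ(i) = i - (n + 1)`.
-/

lemma strictMonoOn_Icc_iff {β : Type*} [Preorder β] {f : ℤ → β} {a b : ℤ} :
    StrictMonoOn f (Set.Icc a b) ↔ ∀ i j, a ≤ i → i < j → j ≤ b → f i < f j :=
  ⟨fun hf i j hai hij hjb => hf ⟨hai, by omega⟩ ⟨by omega, hjb⟩ hij,
    fun hf _ hi _ hj hij => hf _ _ hi.1 hij hj.2⟩

lemma strictMono_fin_shift_iff {β : Type*} [Preorder β] {n : ℕ} {f : ℤ → β} :
    StrictMono (fun i : Fin n => f ((i : ℤ) + 1)) ↔ StrictMonoOn f (Set.Icc 1 n) := by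
  rw [strictMonoOn_Icc_iff]
  constructor
  · intro hf i j hi hij hjn
    obtain ⟨k, rfl⟩ : ∃ k : ℕ, i = k + 1 := ⟨(i - 1).toNat, by omega⟩
    obtain ⟨l, rfl⟩ : ∃ l : ℕ, j = l + 1 := ⟨(j - 1).toNat, by omega⟩
    exact @hf ⟨k, by omega⟩ ⟨l, by omega⟩ (by rw [Fin.mk_lt_mk]; omega)
  · intro hf a b hab
    have hab' : (a : ℕ) < b := hab
    exact hf _ _ (by omega) (by omega) (by omega)

lemma StrictMonoOn.add_sub_le_of_Icc {f : ℤ → ℤ} {a b : ℤ} (hf : StrictMonoOn f (Set.Icc a b))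
    {i j : ℤ} (hai : a ≤ i) (hij : i ≤ j) (hjb : j ≤ b) : f i + (j - i) ≤ f j := by
  induction j, hij using Int.leInduction with
  | base => simp
  | succ k hik ih =>
    have hstep : f k < f (k + 1) := hf ⟨by omega, by omega⟩ ⟨by omega, hjb⟩ (by omega)
    have := ih (by omega)
    omega

lemma forall_fin_lt_iff_lt_one {n : ℕ} (hn : 1 ≤ n) {f : ℤ → ℤ} (hf : MonotoneOn f (Set.Icc 1 n)) :
    (∀ i j : Fin n, f ((i : ℤ) + 1) < (j : ℤ) + 1) ↔ f n < 1 := by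
  constructor
  · intro h
    simpa [show ((n - 1 : ℕ) : ℤ) + 1 = n by omega] using h ⟨n - 1, by omega⟩ ⟨0, by omega⟩
  · intro h i j
    have : f ((i : ℤ) + 1) ≤ f n := hf ⟨by omega, by omega⟩ ⟨by omega, le_rfl⟩ (by omega)
    omega

lemma Icc_one_subset_signedSet (n : ℕ) : Set.Icc (1 : ℤ) n ⊆ SignedSet n :=
  fun i ⟨h1, hn⟩ => ⟨by omega, by rw [abs_of_pos (by omega)]; exact hn⟩

lemma eq_sub_of_strictMonoOn_of_lt_one {n : ℕ} {σ : ℤ → ℤ}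
    (hmaps : Set.MapsTo σ (Set.Icc 1 n) (SignedSet n)) (hmono : StrictMonoOn σ (Set.Icc 1 n))
    (hlast : σ n < 1) {i : ℤ} (hi : 1 ≤ i) (hin : i ≤ n) : σ i = i - (n + 1) := by
  obtain ⟨-, hσ1⟩ := hmaps ⟨le_rfl, hi.trans hin⟩
  obtain ⟨hσn, -⟩ := hmaps ⟨hi.trans hin, le_rfl⟩
  have hfirst := hmono.add_sub_le_of_Icc le_rfl hi hin
  have hrest := hmono.add_sub_le_of_Icc hi hin le_rfl
  rw [abs_le] at hσ1
  omega

/-- σ has an n-crossing using all of [n] via the lower crossing condition iff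
σ(1) < σ(2) < ... < σ(n) < 1; for n ≥ 3 this forces σ(i) = i − (n+1). -/
theorem full_lower_crossing_iff (n : ℕ) (hn : 1 ≤ n) (σ : ℤ → ℤ) (h : IsSignedPerm n σ) :
    ((StrictMono (fun i : Fin n => σ ((i : ℤ) + 1)) ∧
        ∀ i j : Fin n, σ ((i : ℤ) + 1) < (j : ℤ) + 1) ↔
      ((∀ i j : ℤ, 1 ≤ i → i < j → j ≤ (n : ℤ) → σ i < σ j) ∧ σ (n : ℤ) < 1)) ∧
    (3 ≤ n → (∀ i j : ℤ, 1 ≤ i → i < j → j ≤ (n : ℤ) → σ i < σ j) → σ (n : ℤ) < 1 →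
      ∀ i : ℤ, 1 ≤ i → i ≤ (n : ℤ) → σ i = i - ((n : ℤ) + 1)) := by
  simp only [← strictMonoOn_Icc_iff, strictMono_fin_shift_iff]
  refine ⟨and_congr_right fun hmono => forall_fin_lt_iff_lt_one hn hmono.monotoneOn, ?_⟩
  intro _ hmono hlast i hi hin
  exact eq_sub_of_strictMonoOn_of_lt_one (h.2.mapsTo.mono_left (Icc_one_subset_signedSet n))
    hmono hlast hi hin
end
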